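/- arXiv:1509.02849 — 3 statements merged into one kernel-verified Lean document; each statement's English description precedes it below -/
import Mathlib

section
/- Fix an integer d ≥ 3. For m ≥ 1 and 1 ≤ h ≤ m define p(m,h) = (d−2)·(d−1)^{h−1} / ((d−1)^m − 1) and α(m,h) = ((d−1)^{m−h+1} − 1) / ((d−1)^{m+1} − 1). Then for every integer m ≥ 1: (i) α(m,1)·p(m,1) = p(m+1,1); (ii) for every h with 2 ≤ h ≤ m, α(m,h)·p(m,h) + (1 − α(m,h−1))·p(m,h−1) = p(m+1,h); and (iii) (1 − α(m,m))·p(m,m) = p(m+1,m+1). -/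
/-!
With `x = d - 1`, the claimed invariant law is `p(m,h) = (x-1) x^(h-1) / (x^m - 1)` and the
keep probability is `α(m,h) = (x^(m-h+1) - 1) / (x^(m+1) - 1)`. The key simplification is
`1 - α(m,h) = x^(m+1-h) (x^h - 1) / (x^(m+1) - 1)`; after it, each balance equation is a
polynomial identity over the common denominator `(x^m - 1)(x^(m+1) - 1)`, and the only
requirement is that these powers of `x` differ from `1`, i.e. `d ≥ 3`.
-/

namespace AdaptiveDiffusion

variable {K : Type*} [Field K] (x : K)

def hopDist (m h : ℕ) : K := (x - 1) * x ^ (h - 1) / (x ^ m - 1)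

def keepProb (m h : ℕ) : K := (x ^ (m - h + 1) - 1) / (x ^ (m + 1) - 1)

variable {x}

theorem one_sub_keepProb {m h : ℕ} (hhm : h ≤ m) (hm₁ : x ^ (m + 1) ≠ 1) :
    1 - keepProb x m h = x ^ (m + 1 - h) * (x ^ h - 1) / (x ^ (m + 1) - 1) := by
  obtain ⟨j, hj⟩ : ∃ j, m + 1 = h + j := ⟨m + 1 - h, by omega⟩
  have hden : x ^ h * x ^ j - 1 ≠ 0 := by rw [← pow_add, ← hj]; exact sub_ne_zero.mpr hm₁
  rw [keepProb, show m - h + 1 = j by omega, show m + 1 - h = j by omega, hj, pow_add,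
    eq_div_iff hden, sub_mul, div_mul_cancel₀ _ hden]
  ring

theorem keepProb_mul_hopDist_one {m : ℕ} (hm : x ^ m ≠ 1) :
    keepProb x m 1 * hopDist x m 1 = hopDist x (m + 1) 1 := by
  obtain _ | n := m
  · exact absurd (pow_zero x) hm
  have hden : x ^ (n + 1) - 1 ≠ 0 := sub_ne_zero.mpr hm
  simp only [keepProb, hopDist, Nat.add_sub_cancel, Nat.sub_self, pow_zero, mul_one]
  field_simp

theorem keepProb_mul_hopDist_add_one_sub_keepProb_mul_hopDist {m h : ℕ} (h₂ : 2 ≤ h)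
    (hhm : h ≤ m) (hm : x ^ m ≠ 1) (hm₁ : x ^ (m + 1) ≠ 1) :
    keepProb x m h * hopDist x m h + (1 - keepProb x m (h - 1)) * hopDist x m (h - 1) =
      hopDist x (m + 1) h := by
  rw [one_sub_keepProb (by omega) hm₁]
  obtain ⟨k, rfl⟩ : ∃ k, h = k + 2 := ⟨h - 2, by omega⟩
  obtain ⟨j, rfl⟩ : ∃ j, m = k + j + 2 := ⟨m - (k + 2), by omega⟩
  have hden : x ^ (k + j + 2) - 1 ≠ 0 := sub_ne_zero.mpr hm
  have hden₁ : x ^ (k + j + 2 + 1) - 1 ≠ 0 := sub_ne_zero.mpr hm₁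
  simp only [keepProb, hopDist, show k + j + 2 - (k + 2) + 1 = j + 1 by omega,
    show k + 2 - 1 = k + 1 by omega, show k + j + 2 + 1 - (k + 1) = j + 2 by omega,
    show k + 1 - 1 = k by omega]
  field_simp
  ring

theorem one_sub_keepProb_self_mul_hopDist {m : ℕ} (hm₀ : 1 ≤ m) (hm : x ^ m ≠ 1)
    (hm₁ : x ^ (m + 1) ≠ 1) :
    (1 - keepProb x m m) * hopDist x m m = hopDist x (m + 1) (m + 1) := by
  rw [one_sub_keepProb (by omega) hm₁]
  obtain ⟨n, rfl⟩ : ∃ n, m = n + 1 := ⟨m - 1, by omega⟩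
  have hden : x ^ (n + 1) - 1 ≠ 0 := sub_ne_zero.mpr hm
  have hden₁ : x ^ (n + 1 + 1) - 1 ≠ 0 := sub_ne_zero.mpr hm₁
  simp only [hopDist, Nat.add_sub_cancel, Nat.add_sub_cancel_left]
  field_simp
  ring

end AdaptiveDiffusion

open AdaptiveDiffusion in
/-- Theorem 1(b), regular tree case `d ≥ 3`: the choice
`α(m,h) = ((d−1)^{m−h+1} − 1)/((d−1)^{m+1} − 1)` preserves the distribution
`p(m,h) = (d−2)(d−1)^{h−1}/((d−1)^m − 1)` of the hop distance of the virtual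
source under the Markov transition from time `2m` to time `2m+2`. -/
theorem stmt_1 (d : ℕ) (hd : 3 ≤ d)
    (p : ℕ → ℕ → ℝ) (α : ℕ → ℕ → ℝ)
    (hp : ∀ m h, p m h = ((d : ℝ) - 2) * ((d : ℝ) - 1) ^ (h - 1)
        / (((d : ℝ) - 1) ^ m - 1))
    (hα : ∀ m h, α m h = (((d : ℝ) - 1) ^ (m - h + 1) - 1)
        / (((d : ℝ) - 1) ^ (m + 1) - 1)) :
    ∀ m : ℕ, 1 ≤ m →
      (α m 1 * p m 1 = p (m + 1) 1) ∧
      (∀ h : ℕ, 2 ≤ h → h ≤ m →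
        α m h * p m h + (1 - α m (h - 1)) * p m (h - 1) = p (m + 1) h) ∧
      ((1 - α m m) * p m m = p (m + 1) (m + 1)) := by
  intro m hm₀
  have hx : (1 : ℝ) < d - 1 := by
    have : (3 : ℝ) ≤ d := by exact_mod_cast hd
    linarith
  have hpow : ∀ n, n ≠ 0 → ((d : ℝ) - 1) ^ n ≠ 1 := fun n hn => (one_lt_pow₀ hx hn).ne'
  have hp' : p = hopDist ((d : ℝ) - 1) := by
    funext m h
    rw [hp, hopDist]
    ring
  have hα' : α = keepProb ((d : ℝ) - 1) := funext₂ hα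
  subst hp' hα'
  exact ⟨keepProb_mul_hopDist_one (hpow m (by omega)),
    fun h h₂ hhm => keepProb_mul_hopDist_add_one_sub_keepProb_mul_hopDist h₂ hhm
      (hpow m (by omega)) (hpow (m + 1) (by omega)),
    one_sub_keepProb_self_mul_hopDist hm₀ (hpow m (by omega)) (hpow (m + 1) (by omega))⟩
end

section
/- Let G be a finite tree (a connected acyclic simple graph) with at least two vertices, and let r be a vertex of G. Then the sum, over all vertices v ≠ r having degree 1, of 1 / (deg(r) · ∏_w (deg(w) − 1)) — where the product ranges over the vertices w of the unique path from r to v other than r and v themselves — equals 1. -/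
/-!
Orient the tree away from `r`: the parent of `v ≠ r` is the penultimate vertex of the path from `r`
to `v`, so every vertex `u ≠ r` has `deg u - 1` children and `r` has `deg r`. For `v ≠ r` the
summand `passProb v` is the probability that the walk passes through `v`, so it splits evenly
among the children of `v`: the children of `r` carry total weight `1`, those of an inner vertex `u`
carry `passProb u`, and leaves have none. Summing over all `u` and comparing with
`∑_{v ≠ r} passProb v`, the inner vertices cancel and the leaves are left with total weight `1`.
-/

open Finset

theorem Fintype.sum_filter_leaves_eq_of_sum_children {ι M : Type*} [Fintype ι] [DecidableEq ι]
    [AddCommGroup M] (parent : ι → ι) (r : ι) (IsLeaf : ι → Prop) [DecidablePred IsLeaf]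
    (q : ι → M) (c : M)
    (hroot : ∑ v ∈ univ.filter (fun v => v ≠ r ∧ parent v = r), q v = c)
    (hleaf : ∀ u ≠ r, IsLeaf u → ∑ v ∈ univ.filter (fun v => v ≠ r ∧ parent v = u), q v = 0)
    (hinner : ∀ u ≠ r, ¬ IsLeaf u →
      ∑ v ∈ univ.filter (fun v => v ≠ r ∧ parent v = u), q v = q u) :
    ∑ v ∈ univ.filter (fun v => v ≠ r ∧ IsLeaf v), q v = c := by
  have hfib := sum_fiberwise_of_maps_to (s := univ.filter (· ≠ r)) (t := univ) (g := parent)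
    (fun _ _ => mem_univ _) q
  simp only [filter_filter] at hfib
  have hnonroot : ∑ u ∈ univ.erase r, ∑ v ∈ univ.filter (fun v => v ≠ r ∧ parent v = u), q v =
      ∑ u ∈ univ.filter (fun u => u ≠ r ∧ ¬ IsLeaf u), q u := by
    rw [← filter_filter, filter_ne', sum_filter]
    refine Finset.sum_congr rfl fun u hu => ?_
    split_ifs with h
    · exact hleaf u (ne_of_mem_erase hu) h
    · exact hinner u (ne_of_mem_erase hu) h
  rw [← add_sum_erase univ _ (mem_univ r), hroot, hnonroot,
    ← sum_filter_add_sum_filter_not (univ.filter (· ≠ r)) IsLeaf] at hfib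
  simp only [filter_filter] at hfib
  exact (add_right_cancel hfib).symm

namespace SimpleGraph

variable {V : Type*} {G : SimpleGraph V} {r u v w : V}

def pathParent (P : ∀ v, G.Walk r v) (v : V) : V := (P v).penultimate

section Fintype

variable [Fintype V] [DecidableEq V]

def pathChildren (P : ∀ v, G.Walk r v) (u : V) : Finset V :=
  univ.filter fun v => v ≠ r ∧ pathParent P v = u

variable [DecidableRel G.Adj]

noncomputable def passProb (P : ∀ v, G.Walk r v) (v : V) : ℝ :=
  1 / ((G.degree r : ℝ) * ∏ w ∈ (P v).support.toFinset \ {r, v}, ((G.degree w : ℝ) - 1))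

end Fintype

variable {P : ∀ v, G.Walk r v}

theorem adj_pathParent (hv : v ≠ r) : G.Adj (pathParent P v) v :=
  (P v).adj_penultimate (Walk.not_nil_of_ne hv.symm)

theorem eq_nil_of_isPath (hP : ∀ v, (P v).IsPath) : P r = .nil :=
  (Walk.isPath_iff_nil.mp (hP r)).eq_nil

theorem support_toFinset_sdiff_root [DecidableEq V] (hu : u ≠ r) :
    (P u).support.toFinset \ {r} = insert u ((P u).support.toFinset \ {r, u}) := by
  ext x
  by_cases hx : x = u
  · subst hx; simp [hu]
  · simp [hx]

namespace IsAcyclic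

theorem eq_concat_pathParent (hG : G.IsAcyclic) (hP : ∀ v, (P v).IsPath) (hv : v ≠ r) :
    P v = (P (pathParent P v)).concat (adj_pathParent hv) := by
  have hdrop : (P v).dropLast = P (pathParent P v) := Subtype.mk.inj <|
    (hG.subsingleton_path _ _).elim ⟨_, (hP v).dropLast⟩ ⟨_, hP _⟩
  conv_lhs => rw [← (P v).concat_dropLast (adj_pathParent hv)]
  rw [hdrop]
  rfl

theorem length_pathParent_add_one (hG : G.IsAcyclic) (hP : ∀ v, (P v).IsPath) (hv : v ≠ r) :
    (P (pathParent P v)).length + 1 = (P v).length := by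
  rw [hG.eq_concat_pathParent hP hv, Walk.length_concat]

theorem pathParent_pathParent_ne (hG : G.IsAcyclic) (hP : ∀ v, (P v).IsPath) (hv : v ≠ r)
    (hu : pathParent P v ≠ r) : pathParent P (pathParent P v) ≠ v := by
  intro h
  have h₁ := hG.length_pathParent_add_one hP hv
  have h₂ := hG.length_pathParent_add_one hP hu
  rw [h] at h₂
  omega

theorem pathParent_eq_of_mem_support (hG : G.IsAcyclic) (hP : ∀ v, (P v).IsPath)
    (h : G.Adj u w) (hu : u ∈ (P w).support) : w ≠ r ∧ pathParent P w = u := by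
  have hw : P w = (P u).concat h := hG.path_concat (hP u) (hP w) h hu
  refine ⟨?_, by rw [pathParent, hw, Walk.penultimate_concat]⟩
  intro hwr
  rw [hwr, eq_nil_of_isPath hP, Walk.support_nil, List.mem_singleton] at hu
  exact h.ne (hu.trans hwr.symm)

theorem adj_iff_pathParent (hG : G.IsAcyclic) (hP : ∀ v, (P v).IsPath) :
    G.Adj u w ↔ (u ≠ r ∧ pathParent P u = w) ∨ (w ≠ r ∧ pathParent P w = u) := by
  refine ⟨fun h => ?_, ?_⟩
  · by_cases hu : u ∈ (P w).support
    · exact .inr (hG.pathParent_eq_of_mem_support hP h hu)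
    · exact .inl (hG.pathParent_eq_of_mem_support hP h.symm
        (hG.mem_support_of_ne_mem_support_of_adj_of_isPath (hP u) (hP w) h hu))
  · rintro (⟨hu, rfl⟩ | ⟨hw, rfl⟩)
    exacts [(adj_pathParent hu).symm, adj_pathParent hw]

theorem support_toFinset_sdiff_pair [DecidableEq V] (hG : G.IsAcyclic) (hP : ∀ v, (P v).IsPath)
    (hv : v ≠ r) :
    (P v).support.toFinset \ {r, v} = (P (pathParent P v)).support.toFinset \ {r} := by
  have hnotin : v ∉ (P (pathParent P v)).support := by
    have := hP v
    rw [hG.eq_concat_pathParent hP hv, Walk.concat_isPath_iff] at this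
    exact this.2
  rw [hG.eq_concat_pathParent hP hv, Walk.support_concat]
  ext x
  simp only [mem_sdiff, List.mem_toFinset, List.mem_append, List.mem_singleton, mem_insert,
    mem_singleton, not_or]
  constructor
  · rintro ⟨hx | rfl, hxr, hxv⟩
    exacts [⟨hx, hxr⟩, absurd rfl hxv]
  · rintro ⟨hx, hxr⟩
    exact ⟨.inl hx, hxr, fun hxv => hnotin (hxv ▸ hx)⟩

variable [Fintype V] [DecidableEq V] [DecidableRel G.Adj]

theorem pathChildren_root (hG : G.IsAcyclic) (hP : ∀ v, (P v).IsPath) :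
    pathChildren P r = G.neighborFinset r := by
  ext w
  simp [pathChildren, hG.adj_iff_pathParent hP (u := r)]

theorem pathChildren_of_ne (hG : G.IsAcyclic) (hP : ∀ v, (P v).IsPath) (hu : u ≠ r) :
    pathChildren P u = G.neighborFinset u \ {pathParent P u} := by
  ext w
  simp only [pathChildren, mem_filter, mem_univ, true_and, mem_sdiff, mem_neighborFinset,
    mem_singleton, hG.adj_iff_pathParent hP (u := u)]
  constructor
  · rintro ⟨hw, rfl⟩
    exact ⟨.inr ⟨hw, rfl⟩, (hG.pathParent_pathParent_ne hP hw hu).symm⟩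
  · rintro ⟨⟨-, rfl⟩ | h, hne⟩
    exacts [absurd rfl hne, h]

theorem card_pathChildren_of_ne (hG : G.IsAcyclic) (hP : ∀ v, (P v).IsPath) (hu : u ≠ r) :
    #(pathChildren P u) = G.degree u - 1 := by
  rw [hG.pathChildren_of_ne hP hu, card_sdiff_of_subset (by simpa using (adj_pathParent hu).symm),
    card_neighborFinset_eq_degree, card_singleton]

theorem sum_pathChildren_passProb (hG : G.IsAcyclic) (hP : ∀ v, (P v).IsPath) (u : V) :
    ∑ v ∈ pathChildren P u, passProb P v = #(pathChildren P u) /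
      ((G.degree r : ℝ) * ∏ w ∈ (P u).support.toFinset \ {r}, ((G.degree w : ℝ) - 1)) := by
  have hconst : ∀ v ∈ pathChildren P u, passProb P v =
      1 / ((G.degree r : ℝ) * ∏ w ∈ (P u).support.toFinset \ {r}, ((G.degree w : ℝ) - 1)) := by
    intro v hv
    obtain ⟨hvr, rfl⟩ : v ≠ r ∧ pathParent P v = u := by simpa [pathChildren] using hv
    rw [passProb, hG.support_toFinset_sdiff_pair hP hvr]
  rw [Finset.sum_congr rfl hconst, sum_const, nsmul_eq_mul, mul_one_div]

theorem sum_pathChildren_root_passProb (hG : G.IsAcyclic) (hP : ∀ v, (P v).IsPath)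
    (hr : G.degree r ≠ 0) : ∑ v ∈ pathChildren P r, passProb P v = 1 := by
  rw [hG.sum_pathChildren_passProb hP, hG.pathChildren_root hP, card_neighborFinset_eq_degree,
    eq_nil_of_isPath hP]
  simp [hr]

theorem sum_pathChildren_passProb_of_degree_eq_one (hG : G.IsAcyclic)
    (hP : ∀ v, (P v).IsPath) (hu : u ≠ r) (h1 : G.degree u = 1) :
    ∑ v ∈ pathChildren P u, passProb P v = 0 := by
  have hempty : pathChildren P u = ∅ :=
    card_eq_zero.mp (by rw [hG.card_pathChildren_of_ne hP hu, h1])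
  rw [hempty, sum_empty]

theorem sum_pathChildren_passProb_of_ne (hG : G.IsAcyclic) (hP : ∀ v, (P v).IsPath)
    (hu : u ≠ r) (h1 : G.degree u ≠ 1) : ∑ v ∈ pathChildren P u, passProb P v = passProb P u := by
  have hdeg : 1 ≤ G.degree u :=
    G.degree_pos_iff_exists_adj u |>.mpr ⟨_, (adj_pathParent (P := P) hu).symm⟩
  have hne : (G.degree u : ℝ) - 1 ≠ 0 := by
    rw [sub_ne_zero]; exact_mod_cast h1
  rw [hG.sum_pathChildren_passProb hP, hG.card_pathChildren_of_ne hP hu, Nat.cast_sub hdeg,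
    support_toFinset_sdiff_root hu, prod_insert (by simp), passProb, Nat.cast_one]
  field_simp

end IsAcyclic

end SimpleGraph

/-- Step 3 of the proof of Theorem 2: in a finite tree with at least two
vertices, rooted at `r`, the quantities
`1/(deg(r)·∏_{w ∈ path(r,v) ∖ {r,v}} (deg(w) − 1))` sum to `1` over the
leaves `v ≠ r` (here `P v` is the unique path from `r` to `v`). -/
theorem stmt_8 {V : Type*} [Fintype V] [DecidableEq V]
    (G : SimpleGraph V) [DecidableRel G.Adj]
    (hG : G.IsTree) (h2 : 2 ≤ Fintype.card V) (r : V)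
    (P : ∀ v : V, G.Walk r v) (hP : ∀ v, (P v).IsPath) :
    ∑ v ∈ Finset.univ.filter (fun v : V => v ≠ r ∧ G.degree v = 1),
      (1 : ℝ) / ((G.degree r : ℝ) *
        ∏ w ∈ (P v).support.toFinset \ {r, v}, ((G.degree w : ℝ) - 1)) = 1 := by
  have hac := hG.isAcyclic
  have hr : G.degree r ≠ 0 := by
    obtain ⟨v, hv⟩ := Fintype.exists_ne_of_one_lt_card h2 r
    exact (G.degree_pos_iff_exists_adj r |>.mpr
      ⟨_, (P v).adj_snd (SimpleGraph.Walk.not_nil_of_ne hv.symm)⟩).ne'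
  exact Fintype.sum_filter_leaves_eq_of_sum_children (SimpleGraph.pathParent P) r
    (G.degree · = 1) (SimpleGraph.passProb P) 1 (hac.sum_pathChildren_root_passProb hP hr)
    (fun u hu h1 => hac.sum_pathChildren_passProb_of_degree_eq_one hP hu h1)
    (fun u hu h1 => hac.sum_pathChildren_passProb_of_ne hP hu h1)
end

section
/- Let g : ℝ → ℝ be convex on [0,1], monotone nondecreasing on [0,1], with g(0) = 0 and g(1) = 1, and suppose g is differentiable at a point s₁ ∈ (0,1) with derivative c. Then for every natural number n and every s ∈ [s₁, 1], the n-fold iterate g^{[n]}(s) satisfies g^{[n]}(s) ≤ max(1 − cⁿ·(1 − s), g(s₁)). -/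
/-!
By convexity, on `[s₁, 1]` the graph of `g` lies below the line through `(1, 1)` of slope
`c = g'(s₁)`, so while the orbit stays above `s₁` each step shrinks its distance to `1` by the
factor `c`. Once the orbit falls to or below `s₁`, monotonicity caps the next iterate by `g s₁`,
and since `g s₁ ≤ s₁` it never climbs back above `s₁`.
-/

open Set Filter

theorem iterate_le_max_of_le_sub_mul {g : ℝ → ℝ} {S : Set ℝ} {c p s₁ : ℝ}
    (hmaps : MapsTo g S S) (hmono : MonotoneOn g S) (hs₁ : s₁ ∈ S) (hgs₁ : g s₁ ≤ s₁)
    (hc : 0 ≤ c) (hlin : ∀ t ∈ S, s₁ < t → g t ≤ p - c * (p - t)) (n : ℕ) {s : ℝ} (hs : s ∈ S) :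
    g^[n] s ≤ max (p - c ^ n * (p - s)) (g s₁) := by
  induction n with
  | zero => simp
  | succ n ih =>
    rw [Function.iterate_succ_apply']
    set t := g^[n] s
    have ht : t ∈ S := hmaps.iterate n hs
    rcases le_or_gt t s₁ with hts | hts
    · exact le_max_of_le_right (hmono ht hs₁ hts)
    · have htp : t ≤ p - c ^ n * (p - s) :=
        (le_max_iff.mp ih).resolve_right fun h => (h.trans hgs₁).not_gt hts
      calc g t ≤ p - c * (p - t) := hlin t ht hts
        _ ≤ p - c * (c ^ n * (p - s)) := by gcongr; linarith
        _ = p - c ^ (n + 1) * (p - s) := by ring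
        _ ≤ _ := le_max_left _ _

theorem ConvexOn.le_sub_mul_of_hasDerivAt {g : ℝ → ℝ} {S : Set ℝ} {c x y t : ℝ}
    (hconv : ConvexOn ℝ S g) (hx : x ∈ S) (hy : y ∈ S) (ht : t ∈ S) (hderiv : HasDerivAt g c x)
    (hxt : x ≤ t) (hty : t ≤ y) : g t ≤ g y - c * (y - t) := by
  rcases hty.eq_or_lt with rfl | hty
  · simp
  have hc : c ≤ slope g t y :=
    calc c ≤ slope g x y := hconv.le_slope_of_hasDerivAt hx hy (hxt.trans_lt hty) hderiv
      _ = slope g y x := slope_comm g x y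
      _ ≤ slope g y t := hconv.slope_mono hy ⟨hx, (hxt.trans_lt hty).ne⟩ ⟨ht, hty.ne⟩ hxt
      _ = slope g t y := slope_comm g y t
  have hchord : (y - t) * slope g t y = g y - g t := sub_smul_slope g t y
  have := mul_le_mul_of_nonneg_left hc (sub_nonneg.mpr hty.le)
  linarith

theorem ConvexOn.le_self_of_map_zero_of_map_one {g : ℝ → ℝ} (hconv : ConvexOn ℝ (Icc 0 1) g)
    (h0 : g 0 = 0) (h1 : g 1 = 1) {x : ℝ} (hx : x ∈ Icc (0 : ℝ) 1) : g x ≤ x := by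
  have := hconv.2 (left_mem_Icc.mpr zero_le_one) (right_mem_Icc.mpr zero_le_one)
    (sub_nonneg.mpr hx.2) hx.1 (sub_add_cancel 1 x)
  simpa [h0, h1] using this

/-- Region I iteration bound from the proof of Lemma 3: for a probability
generating function `g` (convex and monotone on `[0,1]`, `g(0)=0`, `g(1)=1`)
differentiable at `s₁ ∈ (0,1)` with derivative `c`, the iterates starting at
`s ∈ [s₁,1]` satisfy `g^{[n]}(s) ≤ max(1 − cⁿ(1 − s), g(s₁))`. -/
theorem stmt_13 (g : ℝ → ℝ) (c : ℝ) (s₁ : ℝ)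
    (hconv : ConvexOn ℝ (Set.Icc 0 1) g)
    (hmono : MonotoneOn g (Set.Icc 0 1))
    (h0 : g 0 = 0) (h1 : g 1 = 1)
    (hs₁ : s₁ ∈ Set.Ioo (0 : ℝ) 1)
    (hderiv : HasDerivAt g c s₁) :
    ∀ (n : ℕ) (s : ℝ), s ∈ Set.Icc s₁ 1 →
      g^[n] s ≤ max (1 - c ^ n * (1 - s)) (g s₁) := by
  intro n s hs
  have hs₁mem : s₁ ∈ Icc (0 : ℝ) 1 := Ioo_subset_Icc_self hs₁
  have hmaps : MapsTo g (Icc 0 1) (Icc 0 1) := by simpa [h0, h1] using hmono.mapsTo_Icc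
  have hacc : AccPt s₁ (𝓟 (Icc 0 1)) :=
    ((PerfectSpace.univ_preperfect s₁ (mem_univ _)).nhds_inter (Ioo_mem_nhds hs₁.1 hs₁.2)).mono
      (by simp [Ioo_subset_Icc_self])
  have hc : 0 ≤ c := hderiv.hasDerivWithinAt.nonneg_of_monotoneOn hacc hmono
  refine iterate_le_max_of_le_sub_mul hmaps hmono hs₁mem
    (hconv.le_self_of_map_zero_of_map_one h0 h1 hs₁mem) hc (fun t ht hst => ?_) n
    ⟨hs₁.1.le.trans hs.1, hs.2⟩
  simpa [h1] using hconv.le_sub_mul_of_hasDerivAt hs₁mem (right_mem_Icc.mpr zero_le_one) ht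
    hderiv hst.le ht.2
end
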